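/- arXiv:2210.07639 — 16 statements merged into one kernel-verified Lean document; each statement's English description precedes it below -/
import Mathlib

section
/- Let p : ℕ → ℝ be a non-increasing sequence of non-negative reals with total sum W = Σ_{j≥1} p_j (finitely supported). Let α ≥ 1, γ ≥ 1, and 0 ≤ β < α be integers. Then the sum Σ_{k≥γ} p_{α·k+β} is at most (W − P_{α·(γ−1)+β}) / α, where P_t denotes the sum of the first t terms of p. -/
/-- Lemma `theW`: for a non-increasing, non-negative, finitely supported sequence
with total sum `W`, and integers `α ≥ 1`, `γ ≥ 1`, `0 ≤ β < α`, the sum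
`Σ_{k ≥ γ} p (α k + β)` is at most `(W - P_{α(γ-1)+β}) / α`. -/
theorem stmt_2 (p : ℕ → ℝ)
    (hmono : ∀ i j : ℕ, 1 ≤ i → i ≤ j → p j ≤ p i)
    (hnonneg : ∀ j : ℕ, 0 ≤ p j)
    (hfin : ∃ n : ℕ, ∀ j : ℕ, n < j → p j = 0)
    (W : ℝ) (hW : W = ∑' j : ℕ, p (j + 1))
    (α β γ : ℕ) (hα : 1 ≤ α) (hγ : 1 ≤ γ) (hβ : β < α) :
    (∑' k : ℕ, p (α * (γ + k) + β)) ≤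
      (W - ∑ j ∈ Finset.range (α * (γ - 1) + β), p (j + 1)) / α := by
  obtain ⟨n, hn⟩ := hfin
  set c := α * (γ - 1) + β with hc
  -- rewrite the argument
  have harg : ∀ k : ℕ, α * (γ + k) + β = c + α * (k + 1) := by
    intro k
    have : γ + k = (γ - 1) + (k + 1) := by omega
    rw [this, hc]; ring
  -- turn W into a finite sum
  have hWfin : W = ∑ j ∈ Finset.range (c + α * n + n), p (j + 1) := by
    rw [hW]
    apply tsum_eq_sum
    intro j hj
    simp only [Finset.mem_range, not_lt] at hj
    exact hn _ (by omega)
  -- turn LHS into a finite sum over range n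
  have hL : (∑' k : ℕ, p (α * (γ + k) + β)) = ∑ k ∈ Finset.range n, p (c + α * (k + 1)) := by
    have : (∑' k : ℕ, p (α * (γ + k) + β)) = ∑' k : ℕ, p (c + α * (k + 1)) := by
      congr 1; funext k; rw [harg]
    rw [this]
    apply tsum_eq_sum
    intro k hk
    simp only [Finset.mem_range, not_lt] at hk
    apply hn
    have : k + 1 ≤ α * (k + 1) := Nat.le_mul_of_pos_left _ hα
    omega
  rw [hL, hWfin]
  have hαpos : (0 : ℝ) < α := by exact_mod_cast hα
  rw [le_div_iff₀ hαpos]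
  -- key: block bound
  have hblock : ∀ k : ℕ, p (c + α * (k + 1)) * α ≤
      ∑ j ∈ Finset.Ico (c + α * k) (c + α * (k + 1)), p (j + 1) := by
    intro k
    have hcard : (Finset.Ico (c + α * k) (c + α * (k + 1))).card = α := by
      rw [Nat.card_Ico]; ring_nf; omega
    calc p (c + α * (k + 1)) * α
        = ∑ _j ∈ Finset.Ico (c + α * k) (c + α * (k + 1)), p (c + α * (k + 1)) := by
          rw [Finset.sum_const, hcard, nsmul_eq_mul, mul_comm]
      _ ≤ ∑ j ∈ Finset.Ico (c + α * k) (c + α * (k + 1)), p (j + 1) := by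
          apply Finset.sum_le_sum
          intro j hj
          simp only [Finset.mem_Ico] at hj
          exact hmono (j + 1) _ (by omega) (by omega)
  calc (∑ k ∈ Finset.range n, p (c + α * (k + 1))) * α
      = ∑ k ∈ Finset.range n, p (c + α * (k + 1)) * α := by rw [Finset.sum_mul]
    _ ≤ ∑ k ∈ Finset.range n, ∑ j ∈ Finset.Ico (c + α * k) (c + α * (k + 1)), p (j + 1) :=
        Finset.sum_le_sum fun k _ => hblock k
    _ = ∑ j ∈ Finset.Ico c (c + α * n), p (j + 1) := by
        clear hL hWfin hn
        induction n with
        | zero => simp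
        | succ m ih =>
          rw [Finset.sum_range_succ, ih,
            Finset.sum_Ico_consecutive _ (by omega : c ≤ c + α * m)
              (by have := Nat.mul_le_mul_left α (show m ≤ m + 1 by omega); omega)]
    _ ≤ ∑ j ∈ Finset.Ico c (c + α * n + n), p (j + 1) := by
        apply Finset.sum_le_sum_of_subset_of_nonneg
        · exact Finset.Ico_subset_Ico le_rfl (by omega)
        · intro j _ _; exact hnonneg _
    _ = ∑ j ∈ Finset.range (c + α * n + n), p (j + 1) - ∑ j ∈ Finset.range c, p (j + 1) := by
        have := Finset.sum_range_add_sum_Ico (fun j => p (j + 1))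
          (show c ≤ c + α * n + n by omega)
        linarith
end

section
/- Let p : ℕ → ℝ be non-increasing and non-negative with finite support, W its total sum, and λ a real satisfying λ ≥ p_1 and W ≤ 2λ. Then C_1 := Σ_{i≥1} p_{4i−3} satisfies C_1 ≤ 1.25·λ. -/
lemma sum4_blocks (f : ℕ → ℝ) (m : ℕ) :
    ∑ j ∈ Finset.range (4 * m), f j
      = ∑ i ∈ Finset.range m, (f (4 * i) + f (4 * i + 1) + f (4 * i + 2) + f (4 * i + 3)) := by
  induction m with
  | zero => simp
  | succ m ih =>
    have h4 : 4 * (m + 1) = 4 * m + 1 + 1 + 1 + 1 := by ring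
    rw [h4, Finset.sum_range_succ, Finset.sum_range_succ, Finset.sum_range_succ,
      Finset.sum_range_succ, Finset.sum_range_succ, ih]
    ring

/-- Two machines, first solution, machine 1 (jobs ≡ 1 mod 4):
`C₁ = Σ_{i≥1} p (4i-3) ≤ 1.25 λ` when `λ ≥ p 1` and `W ≤ 2 λ`. -/
theorem stmt_3 (p : ℕ → ℝ)
    (hmono : ∀ i j : ℕ, 1 ≤ i → i ≤ j → p j ≤ p i)
    (hnonneg : ∀ j : ℕ, 0 ≤ p j)
    (hfin : ∃ n : ℕ, ∀ j : ℕ, n < j → p j = 0)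
    (W : ℝ) (hW : W = ∑' j : ℕ, p (j + 1))
    (lam : ℝ) (hp1 : p 1 ≤ lam) (hWlam : W ≤ 2 * lam) :
    (∑' i : ℕ, p (4 * i + 1)) ≤ 1.25 * lam := by
  obtain ⟨n, hn⟩ := hfin
  set N := n + 1 with hN
  have hS1 : (∑' i : ℕ, p (4 * i + 1)) = ∑ i ∈ Finset.range N, p (4 * i + 1) := by
    refine tsum_eq_sum ?_
    intro i hi
    simp only [Finset.mem_range, not_lt] at hi
    exact hn _ (by omega)
  have hWs : W = ∑ j ∈ Finset.range (4 * N + 1), p (j + 1) := by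
    rw [hW]
    refine tsum_eq_sum ?_
    intro j hj
    simp only [Finset.mem_range, not_lt] at hj
    exact hn _ (by omega)
  -- split off first term
  have hsplit : ∑ i ∈ Finset.range N, p (4 * i + 1)
      = (∑ i ∈ Finset.range n, p (4 * i + 5)) + p 1 := by
    rw [hN, Finset.sum_range_succ']
    congr 1
  have hWsplit : ∑ j ∈ Finset.range (4 * N + 1), p (j + 1)
      = (∑ j ∈ Finset.range (4 * N), p (j + 2)) + p 1 := by
    rw [Finset.sum_range_succ']
  -- key inequality on the tail
  have hkey : 4 * (∑ i ∈ Finset.range n, p (4 * i + 5))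
      ≤ ∑ j ∈ Finset.range (4 * N), p (j + 2) := by
    have h1 : 4 * (∑ i ∈ Finset.range n, p (4 * i + 5))
        ≤ ∑ i ∈ Finset.range n,
            (p (4 * i + 2) + p (4 * i + 3) + p (4 * i + 4) + p (4 * i + 5)) := by
      rw [Finset.mul_sum]
      apply Finset.sum_le_sum
      intro i _
      have h2 := hmono (4 * i + 2) (4 * i + 5) (by omega) (by omega)
      have h3 := hmono (4 * i + 3) (4 * i + 5) (by omega) (by omega)
      have h4 := hmono (4 * i + 4) (4 * i + 5) (by omega) (by omega)
      linarith
    have h2 : ∑ j ∈ Finset.range (4 * n), p (j + 2)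
        = ∑ i ∈ Finset.range n,
            (p (4 * i + 2) + p (4 * i + 3) + p (4 * i + 4) + p (4 * i + 5)) := by
      rw [sum4_blocks (fun j => p (j + 2)) n]
    have h3 : ∑ j ∈ Finset.range (4 * n), p (j + 2)
        ≤ ∑ j ∈ Finset.range (4 * N), p (j + 2) := by
      apply Finset.sum_le_sum_of_subset_of_nonneg
      · apply Finset.range_subset_range.2; omega
      · intro j _ _; exact hnonneg _
    linarith
  rw [hS1, hsplit]
  have hWeq : W = (∑ j ∈ Finset.range (4 * N), p (j + 2)) + p 1 := by
    rw [hWs, hWsplit]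
  linarith
end

section
/- Let p : ℕ → ℝ be non-increasing and non-negative with finite support, W its total sum, and λ a real satisfying λ ≥ p_1, λ ≥ 2·p_3, and W ≤ 2λ. Then L_2 := p_2 + p_3 + Σ_{i≥3} p_{2i−1} satisfies L_2 ≤ 1.25·λ. -/
lemma pair_sum (p : ℕ → ℝ) (N : ℕ) :
    ∑ j ∈ Finset.range (2 * N), p (j + 4)
      = ∑ i ∈ Finset.range N, (p (2 * i + 4) + p (2 * i + 5)) := by
  induction N with
  | zero => simp
  | succ n ih =>
    have : 2 * (n + 1) = (2 * n) + 1 + 1 := by ring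
    rw [this, Finset.sum_range_succ, Finset.sum_range_succ, Finset.sum_range_succ, ih,
      show 2 * n + 1 + 4 = 2 * n + 5 from by omega]
    ring

/-- Two machines, second solution, machine 2 (jobs {2,3,5,7,9,...}):
`L₂ = p 2 + p 3 + Σ_{i≥3} p (2i-1) ≤ 1.25 λ` when `λ ≥ p 1`, `λ ≥ 2 p 3`, `W ≤ 2 λ`. -/
theorem stmt_4 (p : ℕ → ℝ)
    (hmono : ∀ i j : ℕ, 1 ≤ i → i ≤ j → p j ≤ p i)
    (hnonneg : ∀ j : ℕ, 0 ≤ p j)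
    (hfin : ∃ n : ℕ, ∀ j : ℕ, n < j → p j = 0)
    (W : ℝ) (hW : W = ∑' j : ℕ, p (j + 1))
    (lam : ℝ) (hp1 : p 1 ≤ lam) (hp3 : 2 * p 3 ≤ lam) (hWlam : W ≤ 2 * lam) :
    p 2 + p 3 + (∑' i : ℕ, p (2 * i + 5)) ≤ 1.25 * lam := by
  obtain ⟨n, hn⟩ := hfin
  set N := n + 1
  have hS : (∑' i : ℕ, p (2 * i + 5)) = ∑ i ∈ Finset.range N, p (2 * i + 5) := by
    apply tsum_eq_sum
    intro i hi
    apply hn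
    have : N ≤ i := by simpa [Finset.mem_range, not_lt] using hi
    omega
  have hWsum : W = ∑ j ∈ Finset.range (2 * N + 3), p (j + 1) := by
    rw [hW]
    apply tsum_eq_sum
    intro j hj
    apply hn
    have : 2 * N + 3 ≤ j := by simpa [Finset.mem_range, not_lt] using hj
    omega
  have hsplit : ∑ j ∈ Finset.range (2 * N + 3), p (j + 1)
      = p 1 + p 2 + p 3 + ∑ j ∈ Finset.range (2 * N), p (j + 4) := by
    have h : 2 * N + 3 = 3 + 2 * N := by ring
    rw [h, Finset.sum_range_add]
    simp only [show ∀ j : ℕ, 3 + j + 1 = j + 4 from fun j => by omega]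
    simp [Finset.sum_range_succ]
  have hle : ∑ i ∈ Finset.range N, p (2 * i + 5)
      ≤ ∑ i ∈ Finset.range N, p (2 * i + 4) :=
    Finset.sum_le_sum fun i _ => hmono (2 * i + 4) (2 * i + 5) (by omega) (by omega)
  have hpair := pair_sum p N
  have hsum_split : ∑ i ∈ Finset.range N, (p (2 * i + 4) + p (2 * i + 5))
      = ∑ i ∈ Finset.range N, p (2 * i + 4) + ∑ i ∈ Finset.range N, p (2 * i + 5) :=
    Finset.sum_add_distrib
  have hp21 : p 2 ≤ p 1 := hmono 1 2 le_rfl (by omega)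
  have hp3nn : 0 ≤ p 3 := hnonneg 3
  rw [hS]
  nlinarith [hpair, hsum_split, hsplit, hWsum]
end

section
/- Let p : ℕ → ℝ be non-increasing and non-negative with finite support and total sum W. Define C_2 := Σ_{i≥1}(p_{4i−2} + p_{4i−1} + p_{4i}) and L_1 := p_1 + Σ_{i≥2} p_{2i}. Then 4·C_2 + 4·L_1 ≤ 5·W. -/
open Finset

private lemma sum_two_mul (f : ℕ → ℝ) (K : ℕ) :
    ∑ i ∈ range (2 * K), f i = ∑ k ∈ range K, (f (2 * k) + f (2 * k + 1)) := by
  induction K with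
  | zero => simp
  | succ n ih =>
    have h2 : 2 * (n + 1) = 2 * n + 1 + 1 := by ring
    rw [h2, sum_range_succ, sum_range_succ, ih, sum_range_succ]
    ring

private lemma sum_four_mul (f : ℕ → ℝ) (K : ℕ) :
    ∑ i ∈ range (4 * K), f i
      = ∑ k ∈ range K, (f (4 * k) + f (4 * k + 1) + f (4 * k + 2) + f (4 * k + 3)) := by
  induction K with
  | zero => simp
  | succ n ih =>
    have h4 : 4 * (n + 1) = 4 * n + 1 + 1 + 1 + 1 := by ring
    rw [h4, sum_range_succ, sum_range_succ, sum_range_succ, sum_range_succ, ih, sum_range_succ]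
    ring

/-- Two machines pairing inequality: with
`C₂ = Σ_{i≥1} (p (4i-2) + p (4i-1) + p (4i))` and `L₁ = p 1 + Σ_{i≥2} p (2i)`,
we have `4 C₂ + 4 L₁ ≤ 5 W`. -/
theorem stmt_5 (p : ℕ → ℝ)
    (hmono : ∀ i j : ℕ, 1 ≤ i → i ≤ j → p j ≤ p i)
    (hnonneg : ∀ j : ℕ, 0 ≤ p j)
    (hfin : ∃ n : ℕ, ∀ j : ℕ, n < j → p j = 0)
    (W : ℝ) (hW : W = ∑' j : ℕ, p (j + 1)) :
    4 * (∑' i : ℕ, (p (4 * i + 2) + p (4 * i + 3) + p (4 * i + 4)))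
      + 4 * (p 1 + ∑' i : ℕ, p (2 * i + 4)) ≤ 5 * W := by
  obtain ⟨n, hn⟩ := hfin
  set K := n + 1 with hK
  -- turn tsums into finite sums
  have h1 : (∑' i : ℕ, (p (4 * i + 2) + p (4 * i + 3) + p (4 * i + 4)))
      = ∑ i ∈ range K, (p (4 * i + 2) + p (4 * i + 3) + p (4 * i + 4)) := by
    refine tsum_eq_sum ?_
    intro i hi
    simp only [mem_range, not_lt] at hi
    rw [hn _ (by omega), hn _ (by omega), hn _ (by omega)]; ring
  have h2 : (∑' i : ℕ, p (2 * i + 4)) = ∑ i ∈ range (2 * K), p (2 * i + 4) := by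
    refine tsum_eq_sum ?_
    intro i hi
    simp only [mem_range, not_lt] at hi
    exact hn _ (by omega)
  have h3 : (∑' j : ℕ, p (j + 1)) = ∑ j ∈ range (4 * K), p (j + 1) := by
    refine tsum_eq_sum ?_
    intro j hj
    simp only [mem_range, not_lt] at hj
    exact hn _ (by omega)
  rw [hW, h1, h2, h3]
  -- regroup the W-sum into blocks of 4
  have hWsum : ∑ j ∈ range (4 * K), p (j + 1)
      = ∑ k ∈ range K, (p (4 * k + 1) + p (4 * k + 2) + p (4 * k + 3) + p (4 * k + 4)) := by
    rw [sum_four_mul (fun j => p (j + 1)) K]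
  -- regroup the L₁-sum into blocks of 2
  have hLsum : ∑ i ∈ range (2 * K), p (2 * i + 4)
      = ∑ k ∈ range K, (p (4 * k + 4) + p (4 * k + 6)) := by
    rw [sum_two_mul (fun i => p (2 * i + 4)) K]
    refine Finset.sum_congr rfl fun k _ => ?_
    have e1 : 2 * (2 * k) + 4 = 4 * k + 4 := by ring
    have e2 : 2 * (2 * k + 1) + 4 = 4 * k + 6 := by ring
    rw [e1, e2]
  rw [hWsum, hLsum]
  -- shift identity for the p (4k+6) sum
  have hshift : ∑ k ∈ range K, p (4 * k + 6) = (∑ k ∈ range K, p (4 * k + 2)) - p 2 := by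
    have hs := Finset.sum_range_succ' (fun k => p (4 * k + 2)) K
    have hlast : ∑ k ∈ range (K + 1), p (4 * k + 2)
        = (∑ k ∈ range K, p (4 * k + 2)) + p (4 * K + 2) := Finset.sum_range_succ _ _
    have hz : p (4 * K + 2) = 0 := hn _ (by omega)
    have he : ∀ k : ℕ, 4 * (k + 1) + 2 = 4 * k + 6 := fun k => by ring
    simp only [he] at hs
    norm_num at hs
    linarith [hs, hlast, hz]
  -- abbreviations
  set Sa := ∑ k ∈ range K, p (4 * k + 1) with hSa
  set Sb := ∑ k ∈ range K, p (4 * k + 2) with hSb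
  set Sc := ∑ k ∈ range K, p (4 * k + 3) with hSc
  set Sd := ∑ k ∈ range K, p (4 * k + 4) with hSd
  have hCsum : ∑ i ∈ range K, (p (4 * i + 2) + p (4 * i + 3) + p (4 * i + 4))
      = Sb + Sc + Sd := by
    rw [hSb, hSc, hSd, ← Finset.sum_add_distrib, ← Finset.sum_add_distrib]
  have hWsum2 : ∑ k ∈ range K, (p (4 * k + 1) + p (4 * k + 2) + p (4 * k + 3) + p (4 * k + 4))
      = Sa + Sb + Sc + Sd := by
    rw [hSa, hSb, hSc, hSd, ← Finset.sum_add_distrib, ← Finset.sum_add_distrib,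
      ← Finset.sum_add_distrib]
  have hL2 : ∑ k ∈ range K, (p (4 * k + 4) + p (4 * k + 6)) = Sd + (Sb - p 2) := by
    rw [Finset.sum_add_distrib, hshift]
  rw [hCsum, hWsum2, hL2]
  -- the key per-block inequality
  set q : ℕ → ℝ := fun k => 5 * p (4 * k + 1) - 3 * p (4 * k + 2) + p (4 * k + 3)
    - 3 * p (4 * k + 4) with hq
  have hqnonneg : ∀ k ∈ range K, 0 ≤ q k := by
    intro k _
    have hab := hmono (4 * k + 1) (4 * k + 2) (by omega) (by omega)
    have hac := hmono (4 * k + 1) (4 * k + 3) (by omega) (by omega)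
    have hcd := hmono (4 * k + 3) (4 * k + 4) (by omega) (by omega)
    simp only [hq]
    linarith
  have hq0 : q 0 ≤ ∑ k ∈ range K, q k :=
    Finset.single_le_sum hqnonneg (by simp [hK])
  have hq0val : 4 * p 1 - 4 * p 2 ≤ q 0 := by
    have h12 := hmono 1 2 (by omega) (by omega)
    have h14 := hmono 1 4 (by omega) (by omega)
    have h24 := hmono 2 4 (by omega) (by omega)
    have h34 := hmono 3 4 (by omega) (by omega)
    simp only [hq]
    norm_num
    linarith
  have hqsum : ∑ k ∈ range K, q k = 5 * Sa - 3 * Sb + Sc - 3 * Sd := by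
    simp only [hq]
    rw [hSa, hSb, hSc, hSd, Finset.mul_sum, Finset.mul_sum, Finset.mul_sum,
      ← Finset.sum_sub_distrib, ← Finset.sum_add_distrib, ← Finset.sum_sub_distrib]
  linarith [hq0, hq0val, hqsum]
end

section
/- Let p : ℕ → ℝ be non-increasing and non-negative with finite support and total sum W, with λ ≥ p_1 and W ≤ 3λ. Then C_1 := Σ_{i≥1} p_{6i−5} satisfies C_1 ≤ (4/3)·λ. -/
lemma sum_range_six_mul (f : ℕ → ℝ) (n : ℕ) :
    ∑ j ∈ Finset.range (6 * n), f j
      = ∑ i ∈ Finset.range n, ∑ k ∈ Finset.range 6, f (6 * i + k) := by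
  induction n with
  | zero => simp
  | succ n ih =>
      have h6 : 6 * (n + 1) = 6 * n + 1 + 1 + 1 + 1 + 1 + 1 := by ring
      rw [h6]
      simp [Finset.sum_range_succ, ih]
      ring

/-- Three machines, first solution, machine 1 (jobs ≡ 1 mod 6):
`C₁ = Σ_{i≥1} p (6i-5) ≤ (4/3) λ` when `λ ≥ p 1` and `W ≤ 3 λ`. -/
theorem stmt_6 (p : ℕ → ℝ)
    (hmono : ∀ i j : ℕ, 1 ≤ i → i ≤ j → p j ≤ p i)
    (hnonneg : ∀ j : ℕ, 0 ≤ p j)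
    (hfin : ∃ n : ℕ, ∀ j : ℕ, n < j → p j = 0)
    (W : ℝ) (hW : W = ∑' j : ℕ, p (j + 1))
    (lam : ℝ) (hp1 : p 1 ≤ lam) (hWlam : W ≤ 3 * lam) :
    (∑' i : ℕ, p (6 * i + 1)) ≤ (4 / 3) * lam := by
  obtain ⟨n, hn⟩ := hfin
  -- W as a finite sum
  have hWfin : W = ∑ j ∈ Finset.range (6 * n + 1), p (j + 1) := by
    rw [hW]
    exact tsum_eq_sum (fun j hj => hn (j + 1) (by
      simp [Finset.mem_range] at hj; omega))
  -- C₁ as a finite sum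
  have hCfin : (∑' i : ℕ, p (6 * i + 1))
      = ∑ i ∈ Finset.range (n + 1), p (6 * i + 1) := by
    exact tsum_eq_sum (fun i hi => hn (6 * i + 1) (by
      simp [Finset.mem_range] at hi; omega))
  rw [hCfin]
  -- split off first term
  have hsplit : ∑ i ∈ Finset.range (n + 1), p (6 * i + 1)
      = p 1 + ∑ i ∈ Finset.range n, p (6 * (i + 1) + 1) := by
    rw [Finset.sum_range_succ']; norm_num; ring
  -- key bound on the tail
  have hkey : (6 : ℝ) * ∑ i ∈ Finset.range n, p (6 * (i + 1) + 1)
      ≤ ∑ j ∈ Finset.range (6 * n), p (j + 2) := by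
    rw [sum_range_six_mul (fun j => p (j + 2)) n, Finset.mul_sum]
    refine Finset.sum_le_sum fun i _ => ?_
    have : ∀ k ∈ Finset.range 6, p (6 * (i + 1) + 1) ≤ p (6 * i + k + 2) := by
      intro k hk
      simp [Finset.mem_range] at hk
      exact hmono (6 * i + k + 2) (6 * (i + 1) + 1) (by omega) (by omega)
    calc (6 : ℝ) * p (6 * (i + 1) + 1)
        = ∑ _k ∈ Finset.range 6, p (6 * (i + 1) + 1) := by simp
      _ ≤ ∑ k ∈ Finset.range 6, p (6 * i + k + 2) := Finset.sum_le_sum this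
  -- W = p 1 + that block sum
  have hWsplit : W = p 1 + ∑ j ∈ Finset.range (6 * n), p (j + 2) := by
    rw [hWfin, Finset.sum_range_succ']; norm_num; ring
  -- conclude
  have hS : ∑ i ∈ Finset.range n, p (6 * (i + 1) + 1) ≤ (W - p 1) / 6 := by
    have : ∑ j ∈ Finset.range (6 * n), p (j + 2) = W - p 1 := by
      rw [hWsplit]; ring
    linarith [hkey, this]
  rw [hsplit]
  linarith
end

section
/- Let p : ℕ → ℝ be non-increasing and non-negative with finite support, total sum W, with W ≤ 3λ and λ ≥ 2·p_4. Then L_3 := p_3 + Σ_{i≥2} p_{3i−2} satisfies L_3 ≤ (4/3)·λ. -/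
lemma triple_sum (p : ℕ → ℝ) (n : ℕ) :
    ∑ i ∈ Finset.range n, (p (3*i+5) + p (3*i+6) + p (3*i+7))
      = ∑ j ∈ Finset.range (3*n), p (j+5) := by
  induction n with
  | zero => simp
  | succ k ih =>
    rw [Finset.sum_range_succ, ih, show 3*(k+1) = 3*k+1+1+1 by ring,
      Finset.sum_range_succ, Finset.sum_range_succ, Finset.sum_range_succ,
      show 3*k+1+5 = 3*k+6 by ring, show 3*k+1+1+5 = 3*k+7 by ring]
    ring

/-- Three machines, second solution, machine 3 (jobs {3,4,7,10,13,...}):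
`L₃ = p 3 + Σ_{i≥2} p (3i-2) ≤ (4/3) λ` when `λ ≥ p 4`, `λ ≥ 2 p 4` and `W ≤ 3 λ`. -/
theorem stmt_7 (p : ℕ → ℝ)
    (hmono : ∀ i j : ℕ, 1 ≤ i → i ≤ j → p j ≤ p i)
    (hnonneg : ∀ j : ℕ, 0 ≤ p j)
    (hfin : ∃ n : ℕ, ∀ j : ℕ, n < j → p j = 0)
    (W : ℝ) (hW : W = ∑' j : ℕ, p (j + 1))
    (lam : ℝ) (hp4 : p 4 ≤ lam) (hp4' : 2 * p 4 ≤ lam) (hWlam : W ≤ 3 * lam) :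
    p 3 + (∑' i : ℕ, p (3 * i + 4)) ≤ (4 / 3) * lam := by
  obtain ⟨n, hn⟩ := hfin
  -- tsum to finite sums
  have hS : (∑' i : ℕ, p (3 * i + 4)) = ∑ i ∈ Finset.range (n+1), p (3*i+4) := by
    apply tsum_eq_sum
    intro i hi
    simp only [Finset.mem_range, not_lt] at hi
    exact hn _ (by omega)
  have hT : (∑' j : ℕ, p (j + 5)) = ∑ j ∈ Finset.range (3*n), p (j+5) := by
    apply tsum_eq_sum
    intro j hj
    simp only [Finset.mem_range, not_lt] at hj
    exact hn _ (by omega)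
  have hT' : (∑' j : ℕ, p (j + 5)) = ∑ j ∈ Finset.range (n+1), p (j+5) := by
    apply tsum_eq_sum
    intro j hj
    simp only [Finset.mem_range, not_lt] at hj
    exact hn _ (by omega)
  have hWs : W = ∑ j ∈ Finset.range (4+(n+1)), p (j+1) := by
    rw [hW]
    apply tsum_eq_sum
    intro j hj
    simp only [Finset.mem_range, not_lt] at hj
    exact hn _ (by omega)
  -- W = p1+p2+p3+p4 + T
  have hWT : W = p 1 + p 2 + p 3 + p 4 + (∑' j : ℕ, p (j + 5)) := by
    rw [hWs, Finset.sum_range_add, hT']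
    have : ∑ i ∈ Finset.range (n+1), p (4 + i + 1)
        = ∑ j ∈ Finset.range (n+1), p (j+5) := by
      apply Finset.sum_congr rfl
      intro j _
      congr 1
      omega
    rw [this]
    simp [Finset.sum_range_succ]
  -- split first term of S
  have hsplit : ∑ i ∈ Finset.range (n+1), p (3*i+4)
      = p 4 + ∑ i ∈ Finset.range n, p (3*i+7) := by
    rw [Finset.sum_range_succ']
    have : ∑ i ∈ Finset.range n, p (3*(i+1)+4)
        = ∑ i ∈ Finset.range n, p (3*i+7) := by
      exact Finset.sum_congr rfl fun i _ => by rw [show 3*(i+1)+4 = 3*i+7 by ring]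
    rw [this, show (3*0+4 : ℕ) = 4 from rfl]
    exact add_comm _ _
  -- termwise bound
  have hterm : 3 * ∑ i ∈ Finset.range n, p (3*i+7)
      ≤ ∑ j ∈ Finset.range (3*n), p (j+5) := by
    rw [← triple_sum p n, Finset.mul_sum]
    apply Finset.sum_le_sum
    intro i _
    have h1 : p (3*i+7) ≤ p (3*i+5) := hmono _ _ (by omega) (by omega)
    have h2 : p (3*i+7) ≤ p (3*i+6) := hmono _ _ (by omega) (by omega)
    linarith
  have h13 : p 3 ≤ p 1 := hmono 1 3 (by omega) (by omega)
  have h23 : p 3 ≤ p 2 := hmono 2 3 (by omega) (by omega)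
  have h34 : p 4 ≤ p 3 := hmono 3 4 (by omega) (by omega)
  rw [hS, hsplit]
  rw [hT] at hWT
  linarith
end

section
/- Let p : ℕ → ℝ be non-increasing and non-negative with finite support and total sum W. Define C_3 := Σ_{i≥1}(p_{6i−3} + p_{6i−2} + p_{6i}) and L_1 := p_1 + Σ_{i≥2} p_{3i}. Then 6·C_3 + 6·L_1 ≤ 5·W + p_1 − p_2. -/
open Finset

private lemma sum_range_six' (f : ℕ → ℝ) (M : ℕ) :
    ∑ j ∈ range (6 * M), f j
      = ∑ i ∈ range M,
          (f (6*i) + f (6*i+1) + f (6*i+2) + f (6*i+3) + f (6*i+4) + f (6*i+5)) := by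
  induction M with
  | zero => simp
  | succ m ih =>
      have h : 6 * (m + 1) = 6 * m + 1 + 1 + 1 + 1 + 1 + 1 := by ring
      rw [h, sum_range_succ, sum_range_succ, sum_range_succ, sum_range_succ,
        sum_range_succ, sum_range_succ, ih, sum_range_succ]
      ring

private lemma sum_range_two' (f : ℕ → ℝ) (M : ℕ) :
    ∑ j ∈ range (2 * M), f j = ∑ i ∈ range M, (f (2*i) + f (2*i+1)) := by
  induction M with
  | zero => simp
  | succ m ih =>
      have h : 2 * (m + 1) = 2 * m + 1 + 1 := by ring
      rw [h, sum_range_succ, sum_range_succ, ih, sum_range_succ]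
      ring

/-- Three machines pairing inequality: with
`C₃ = Σ_{i≥1} (p (6i-3) + p (6i-2) + p (6i))` and `L₁ = p 1 + Σ_{i≥2} p (3i)`,
we have `6 C₃ + 6 L₁ ≤ 5 W + p 1 - p 2`. -/
theorem stmt_8 (p : ℕ → ℝ)
    (hmono : ∀ i j : ℕ, 1 ≤ i → i ≤ j → p j ≤ p i)
    (hnonneg : ∀ j : ℕ, 0 ≤ p j)
    (hfin : ∃ n : ℕ, ∀ j : ℕ, n < j → p j = 0)
    (W : ℝ) (hW : W = ∑' j : ℕ, p (j + 1)) :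
    6 * (∑' i : ℕ, (p (6 * i + 3) + p (6 * i + 4) + p (6 * i + 6)))
      + 6 * (p 1 + ∑' i : ℕ, p (3 * i + 6)) ≤ 5 * W + p 1 - p 2 := by
  obtain ⟨n, hn⟩ := hfin
  set M := n + 1 with hM
  -- turn tsums into finite sums
  have hC : (∑' i : ℕ, (p (6 * i + 3) + p (6 * i + 4) + p (6 * i + 6)))
      = ∑ i ∈ range M, (p (6 * i + 3) + p (6 * i + 4) + p (6 * i + 6)) := by
    apply tsum_eq_sum
    intro i hi
    simp only [mem_range, not_lt] at hi
    rw [hn _ (by omega), hn _ (by omega), hn _ (by omega)]; ring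
  have hL : (∑' i : ℕ, p (3 * i + 6)) = ∑ i ∈ range (2 * M), p (3 * i + 6) := by
    apply tsum_eq_sum
    intro i hi
    simp only [mem_range, not_lt] at hi
    exact hn _ (by omega)
  have hWt : (∑' j : ℕ, p (j + 1)) = ∑ j ∈ range (6 * M), p (j + 1) := by
    apply tsum_eq_sum
    intro j hj
    simp only [mem_range, not_lt] at hj
    exact hn _ (by omega)
  -- block decomposition of W
  have hW6 : ∑ j ∈ range (6 * M), p (j + 1)
      = ∑ i ∈ range M,
          (p (6*i+1) + p (6*i+2) + p (6*i+3) + p (6*i+4) + p (6*i+5) + p (6*i+6)) := by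
    rw [sum_range_six' (fun j => p (j + 1)) M]
  -- block decomposition of L₁ sum
  have hL2 : ∑ i ∈ range (2 * M), p (3 * i + 6)
      = ∑ i ∈ range M, (p (6*i+6) + p (6*i+9)) := by
    rw [sum_range_two' (fun i => p (3 * i + 6)) M]
    apply sum_congr rfl
    intro i _
    show p (3*(2*i)+6) + p (3*(2*i+1)+6) = p (6*i+6) + p (6*i+9)
    have e1 : 3*(2*i)+6 = 6*i+6 := by ring
    have e2 : 3*(2*i+1)+6 = 6*i+9 := by ring
    rw [e1, e2]
  -- shift the p(6i+9) sum
  have hshift : ∑ i ∈ range M, p (6*i+9)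
      = (∑ i ∈ range M, p (6*i+3)) + p (6*M+3) - p 3 := by
    have h1 := Finset.sum_range_succ' (fun i => p (6*i+3)) M
    have h2 := Finset.sum_range_succ (fun i => p (6*i+3)) M
    have h3 : ∑ i ∈ range M, p (6*(i+1)+3) = ∑ i ∈ range M, p (6*i+9) := by
      apply sum_congr rfl
      intro i _
      congr 1
    rw [h3] at h1
    have h0 : (6:ℕ)*0+3 = 3 := by norm_num
    rw [h0] at h1
    linarith [h1, h2]
  have hM3 : p (6*M+3) = 0 := hn _ (by omega)
  -- per-block deficit
  set D : ℕ → ℝ := fun i =>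
    5 * (p (6*i+1) + p (6*i+2) + p (6*i+3) + p (6*i+4) + p (6*i+5) + p (6*i+6))
      - 12 * p (6*i+3) - 6 * p (6*i+4) - 12 * p (6*i+6) with hD
  have hDsum : ∑ i ∈ range M, D i
      = 5 * (∑ i ∈ range M,
            (p (6*i+1) + p (6*i+2) + p (6*i+3) + p (6*i+4) + p (6*i+5) + p (6*i+6)))
        - 12 * (∑ i ∈ range M, p (6*i+3)) - 6 * (∑ i ∈ range M, p (6*i+4))
        - 12 * (∑ i ∈ range M, p (6*i+6)) := by
    simp only [hD, Finset.sum_sub_distrib, Finset.mul_sum]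
  have hCsplit : ∑ i ∈ range M, (p (6*i+3) + p (6*i+4) + p (6*i+6))
      = (∑ i ∈ range M, p (6*i+3)) + (∑ i ∈ range M, p (6*i+4))
        + (∑ i ∈ range M, p (6*i+6)) := by
    rw [Finset.sum_add_distrib, Finset.sum_add_distrib]
  have hL6split : ∑ i ∈ range M, (p (6*i+6) + p (6*i+9))
      = (∑ i ∈ range M, p (6*i+6)) + (∑ i ∈ range M, p (6*i+9)) :=
    Finset.sum_add_distrib
  -- split off block 0
  have hsplit0 : ∑ i ∈ range M, D i = (∑ i ∈ range n, D (i+1)) + D 0 := by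
    rw [hM]
    exact Finset.sum_range_succ' D n
  have htail : 0 ≤ ∑ i ∈ range n, D (i+1) := by
    apply Finset.sum_nonneg
    intro i _
    have h1 : p (6*(i+1)+3) ≤ p (6*(i+1)+1) := hmono _ _ (by omega) (by omega)
    have h2 : p (6*(i+1)+3) ≤ p (6*(i+1)+2) := hmono _ _ (by omega) (by omega)
    have h3 : p (6*(i+1)+4) ≤ p (6*(i+1)+2) := hmono _ _ (by omega) (by omega)
    have h4 : p (6*(i+1)+6) ≤ p (6*(i+1)+2) := hmono _ _ (by omega) (by omega)
    have h5 : p (6*(i+1)+6) ≤ p (6*(i+1)+5) := hmono _ _ (by omega) (by omega)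
    simp only [hD]
    linarith
  have h0 : 0 ≤ D 0 + 6 * p 3 - 5 * p 1 - p 2 := by
    have e : D 0 = 5 * (p 1 + p 2 + p 3 + p 4 + p 5 + p 6)
        - 12 * p 3 - 6 * p 4 - 12 * p 6 := by
      simp only [hD]
    have h1 : p 3 ≤ p 2 := hmono 2 3 (by omega) (by omega)
    have h2 : p 4 ≤ p 2 := hmono 2 4 (by omega) (by omega)
    have h3 : p 6 ≤ p 2 := hmono 2 6 (by omega) (by omega)
    have h4 : p 6 ≤ p 5 := hmono 5 6 (by omega) (by omega)
    rw [e]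
    linarith
  rw [hW, hWt, hW6, hC, hL, hL2]
  rw [hL6split, hshift, hM3, hCsplit]
  linarith [hsplit0, htail, h0, hDsum]
end

section
/- Let p : ℕ → ℝ be non-increasing and non-negative with finite support and total sum W, with λ ≥ p_1 and W ≤ 4λ. Then for i ∈ {1,2}, C_i := Σ_{k≥0} p_{8k+i} satisfies C_i ≤ 1.375·λ. -/
/-- Four machines, first solution, machines 1 and 2 (jobs ≡ i mod 8, i ∈ {1,2}):
`C_i = Σ_{k≥0} p (8k+i) ≤ 1.375 λ` when `λ ≥ p 1` and `W ≤ 4 λ`. -/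
theorem stmt_9 (p : ℕ → ℝ)
    (hmono : ∀ i j : ℕ, 1 ≤ i → i ≤ j → p j ≤ p i)
    (hnonneg : ∀ j : ℕ, 0 ≤ p j)
    (hfin : ∃ n : ℕ, ∀ j : ℕ, n < j → p j = 0)
    (W : ℝ) (hW : W = ∑' j : ℕ, p (j + 1))
    (lam : ℝ) (hp1 : p 1 ≤ lam) (hWlam : W ≤ 4 * lam)
    (i : ℕ) (hi : i = 1 ∨ i = 2) :
    (∑' k : ℕ, p (8 * k + i)) ≤ 1.375 * lam := by
  obtain ⟨n, hn⟩ := hfin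
  have hi1 : 1 ≤ i := by rcases hi with h | h <;> omega
  have hi2 : i ≤ 2 := by rcases hi with h | h <;> omega
  have hts : (∑' k : ℕ, p (8 * k + i)) = ∑ k ∈ Finset.range (n + 1), p (8 * k + i) := by
    apply tsum_eq_sum
    intro k hk
    apply hn
    simp only [Finset.mem_range, not_lt] at hk
    omega
  have hW' : W = ∑ j ∈ Finset.range (8 * n + 1), p (j + 1) := by
    rw [hW]
    apply tsum_eq_sum
    intro j hj
    apply hn
    simp only [Finset.mem_range, not_lt] at hj
    omega
  have key : ∀ N : ℕ, 8 * ∑ k ∈ Finset.range (N + 1), p (8 * k + i)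
      ≤ 8 * p i + ∑ j ∈ Finset.range (8 * N), p (i + 1 + j) := by
    intro N
    induction N with
    | zero => simp
    | succ N ih =>
      rw [Finset.sum_range_succ]
      have h8 : 8 * (N + 1) = 8 * N + 8 := by ring
      rw [h8]
      have expand : ∑ j ∈ Finset.range (8 * N + 8), p (i + 1 + j)
          = ∑ j ∈ Finset.range (8 * N), p (i + 1 + j)
            + (p (i + 1 + 8 * N) + p (i + 1 + (8 * N + 1)) + p (i + 1 + (8 * N + 2))
              + p (i + 1 + (8 * N + 3)) + p (i + 1 + (8 * N + 4)) + p (i + 1 + (8 * N + 5))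
              + p (i + 1 + (8 * N + 6)) + p (i + 1 + (8 * N + 7))) := by
        simp [Finset.sum_range_succ]
        ring
      rw [expand]
      have hm : ∀ t : ℕ, t ≤ 7 → p (8 * N + 8 + i) ≤ p (i + 1 + (8 * N + t)) := by
        intro t ht
        apply hmono <;> omega
      have h0 := hm 0 (by norm_num)
      have h1 := hm 1 (by norm_num)
      have h2 := hm 2 (by norm_num)
      have h3 := hm 3 (by norm_num)
      have h4 := hm 4 (by norm_num)
      have h5 := hm 5 (by norm_num)
      have h6 := hm 6 (by norm_num)
      have h7 := hm 7 (by norm_num)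
      simp only [show i + 1 + 8 * N = i + 1 + (8 * N + 0) from by ring] at expand ⊢
      linarith
  have hcmp : ∑ j ∈ Finset.range (8 * n), p (i + 1 + j)
      ≤ ∑ j ∈ Finset.range (8 * n), p (j + 2) := by
    apply Finset.sum_le_sum
    intro j _
    apply hmono <;> omega
  have hsplit : W = ∑ j ∈ Finset.range (8 * n), p (j + 1 + 1) + p (0 + 1) := by
    rw [hW']
    exact Finset.sum_range_succ' (fun j => p (j + 1)) (8 * n)
  have hsplit' : ∑ j ∈ Finset.range (8 * n), p (j + 2) = W - p 1 := by
    rw [hsplit]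
    simp only [Nat.add_zero, Nat.zero_add]
    have : ∀ j, p (j + 1 + 1) = p (j + 2) := fun j => by norm_num
    simp [this]
  have hpi : p i ≤ p 1 := hmono 1 i le_rfl hi1
  have hkey := key n
  rw [hts]
  have : 8 * ∑ k ∈ Finset.range (n + 1), p (8 * k + i) ≤ 8 * p 1 + (W - p 1) := by
    calc 8 * ∑ k ∈ Finset.range (n + 1), p (8 * k + i)
        ≤ 8 * p i + ∑ j ∈ Finset.range (8 * n), p (i + 1 + j) := hkey
      _ ≤ 8 * p 1 + ∑ j ∈ Finset.range (8 * n), p (j + 2) := by linarith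
      _ = 8 * p 1 + (W - p 1) := by rw [hsplit']
  norm_num
  linarith
end

section
/- Let p : ℕ → ℝ be non-increasing and non-negative with finite support and total sum W, with λ ≥ p_3, λ ≥ 2·p_6, and W ≤ 4λ. Then L_3 := p_3 + Σ_{k≥1} p_{4k+2} satisfies L_3 ≤ 1.375·λ. -/
/-- Four machines, second solution, machine 3 (jobs {3,6,10,14,18,...}):
`L₃ = p 3 + Σ_{k≥1} p (4k+2) ≤ 1.375 λ` when `λ ≥ p 3`, `λ ≥ 2 p 6` and `W ≤ 4 λ`. -/
theorem stmt_10 (p : ℕ → ℝ)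
    (hmono : ∀ i j : ℕ, 1 ≤ i → i ≤ j → p j ≤ p i)
    (hnonneg : ∀ j : ℕ, 0 ≤ p j)
    (hfin : ∃ n : ℕ, ∀ j : ℕ, n < j → p j = 0)
    (W : ℝ) (hW : W = ∑' j : ℕ, p (j + 1))
    (lam : ℝ) (hp3 : p 3 ≤ lam) (hp6 : 2 * p 6 ≤ lam) (hWlam : W ≤ 4 * lam) :
    p 3 + (∑' k : ℕ, p (4 * k + 6)) ≤ 1.375 * lam := by
  obtain ⟨N, hN⟩ := hfin
  have hT : (∑' k : ℕ, p (4 * k + 6)) = ∑ k ∈ Finset.range (N + 1), p (4 * k + 6) := by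
    apply tsum_eq_sum
    intro k hk
    apply hN
    simp only [Finset.mem_range, not_lt] at hk
    omega
  have hWs : W = ∑ j ∈ Finset.range (6 + 4 * N), p (j + 1) := by
    rw [hW]
    apply tsum_eq_sum
    intro j hj
    apply hN
    simp only [Finset.mem_range, not_lt] at hj
    omega
  have key : ∀ m : ℕ, 4 * ∑ k ∈ Finset.range m, p (4 * k + 10)
      ≤ ∑ j ∈ Finset.range (4 * m), p (j + 7) := by
    intro m
    induction m with
    | zero => simp
    | succ m ih =>
      have h4 : 4 * (m + 1) = (4 * m + 1 + 1 + 1) + 1 := by ring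
      rw [Finset.sum_range_succ, h4, Finset.sum_range_succ, Finset.sum_range_succ,
        Finset.sum_range_succ, Finset.sum_range_succ]
      have e1 : 4 * m + 1 + 7 = 4 * m + 8 := by ring
      have e2 : 4 * m + 1 + 1 + 7 = 4 * m + 9 := by ring
      have e3 : 4 * m + 1 + 1 + 1 + 7 = 4 * m + 10 := by ring
      rw [e1, e2, e3]
      have h1 := hmono (4 * m + 7) (4 * m + 10) (by omega) (by omega)
      have h2 := hmono (4 * m + 8) (4 * m + 10) (by omega) (by omega)
      have h3 := hmono (4 * m + 9) (4 * m + 10) (by omega) (by omega)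
      linarith
  have hsplit : ∑ j ∈ Finset.range (6 + 4 * N), p (j + 1)
      = (∑ j ∈ Finset.range 6, p (j + 1)) + ∑ j ∈ Finset.range (4 * N), p (j + 7) := by
    rw [Finset.sum_range_add]
    congr 1
    apply Finset.sum_congr rfl
    intro j _
    congr 1
    omega
  have hTshift : ∑ k ∈ Finset.range (N + 1), p (4 * k + 6)
      = (∑ k ∈ Finset.range N, p (4 * k + 10)) + p 6 := by
    rw [Finset.sum_range_succ']
    congr 1
  have hP6 : ∑ j ∈ Finset.range 6, p (j + 1) = p 1 + p 2 + p 3 + p 4 + p 5 + p 6 := by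
    simp [Finset.sum_range_succ]
  have b1 := hmono 1 3 (by omega) (by omega)
  have b2 := hmono 2 3 (by omega) (by omega)
  have b4 := hmono 4 6 (by omega) (by omega)
  have b5 := hmono 5 6 (by omega) (by omega)
  have hk := key N
  rw [hT, hTshift]
  rw [hWs, hsplit, hP6] at hWlam
  norm_num
  linarith
end

section
/- Let p : ℕ → ℝ be non-increasing and non-negative with finite support and total sum W. Define C_3 := Σ_{k≥0}(p_{8k+3} + p_{8k+6} + p_{8k+8}) and L_1 := p_1 + Σ_{k≥2} p_{4k}. Then 2·C_3 + L_1 ≤ W. -/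
lemma sum_range_two_mul' (f : ℕ → ℝ) (M : ℕ) :
    ∑ k ∈ Finset.range (2 * M), f k = ∑ k ∈ Finset.range M, (f (2 * k) + f (2 * k + 1)) := by
  induction M with
  | zero => simp
  | succ M ih =>
    have h : 2 * (M + 1) = (2 * M + 1) + 1 := by ring
    rw [h, Finset.sum_range_succ, Finset.sum_range_succ, ih, Finset.sum_range_succ]
    ring

lemma key_ineq (p : ℕ → ℝ)
    (hmono : ∀ i j : ℕ, 1 ≤ i → i ≤ j → p j ≤ p i) (M : ℕ) (hM : 1 ≤ M) :
    2 * ∑ k ∈ Finset.range M, (p (8 * k + 3) + p (8 * k + 6) + p (8 * k + 8))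
      + (p 1 + ∑ k ∈ Finset.range M, (p (8 * k + 8) + p (8 * k + 12)))
      ≤ ∑ j ∈ Finset.range (8 * M), p (j + 1) + p (8 * M + 4) := by
  induction M with
  | zero => omega
  | succ M ih =>
    rcases Nat.eq_zero_or_pos M with rfl | hpos
    · have h1 : p 3 ≤ p 2 := hmono 2 3 (by norm_num) (by norm_num)
      have h2 : p 6 ≤ p 5 := hmono 5 6 (by norm_num) (by norm_num)
      have h3 : p 8 ≤ p 7 := hmono 7 8 (by norm_num) (by norm_num)
      have h4 : p 8 ≤ p 4 := hmono 4 8 (by norm_num) (by norm_num)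
      norm_num [Finset.sum_range_succ]
      linarith
    · have ih' := ih hpos
      have e : 8 * (M + 1) = 8 * M + 8 := by ring
      rw [Finset.sum_range_succ, Finset.sum_range_succ, e]
      have esum : ∑ j ∈ Finset.range (8 * M + 8), p (j + 1)
          = ∑ j ∈ Finset.range (8 * M), p (j + 1)
            + (p (8 * M + 1) + p (8 * M + 2) + p (8 * M + 3) + p (8 * M + 4)
              + p (8 * M + 5) + p (8 * M + 6) + p (8 * M + 7) + p (8 * M + 8)) := by
        simp [Finset.sum_range_succ]
        ring
      rw [esum]
      have h1 : p (8 * M + 3) ≤ p (8 * M + 2) := hmono _ _ (by omega) (by omega)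
      have h2 : p (8 * M + 6) ≤ p (8 * M + 5) := hmono _ _ (by omega) (by omega)
      have h3 : p (8 * M + 8) ≤ p (8 * M + 7) := hmono _ _ (by omega) (by omega)
      have h4 : p (8 * M + 8) ≤ p (8 * M + 1) := hmono _ _ (by omega) (by omega)
      have h5 : 8 * M + 8 + 4 = 8 * M + 12 := by ring
      rw [h5]
      linarith

/-- Four machines pairing inequality: with
`C₃ = Σ_{k≥0} (p (8k+3) + p (8k+6) + p (8k+8))` and `L₁ = p 1 + Σ_{k≥2} p (4k)`,
we have `2 C₃ + L₁ ≤ W`. -/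
theorem stmt_11 (p : ℕ → ℝ)
    (hmono : ∀ i j : ℕ, 1 ≤ i → i ≤ j → p j ≤ p i)
    (hnonneg : ∀ j : ℕ, 0 ≤ p j)
    (hfin : ∃ n : ℕ, ∀ j : ℕ, n < j → p j = 0)
    (W : ℝ) (hW : W = ∑' j : ℕ, p (j + 1)) :
    2 * (∑' k : ℕ, (p (8 * k + 3) + p (8 * k + 6) + p (8 * k + 8)))
      + (p 1 + ∑' k : ℕ, p (4 * k + 8)) ≤ W := by
  obtain ⟨n, hn⟩ := hfin
  set M := n + 1 with hMdef
  have t1 : (∑' k : ℕ, (p (8 * k + 3) + p (8 * k + 6) + p (8 * k + 8)))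
      = ∑ k ∈ Finset.range M, (p (8 * k + 3) + p (8 * k + 6) + p (8 * k + 8)) := by
    apply tsum_eq_sum
    intro b hb
    simp only [Finset.mem_range, not_lt] at hb
    rw [hn _ (by omega), hn _ (by omega), hn _ (by omega)]; ring
  have t2 : (∑' k : ℕ, p (4 * k + 8)) = ∑ k ∈ Finset.range (2 * M), p (4 * k + 8) := by
    apply tsum_eq_sum
    intro b hb
    simp only [Finset.mem_range, not_lt] at hb
    exact hn _ (by omega)
  have t3 : W = ∑ j ∈ Finset.range (8 * M), p (j + 1) := by
    rw [hW]
    apply tsum_eq_sum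
    intro b hb
    simp only [Finset.mem_range, not_lt] at hb
    exact hn _ (by omega)
  have t4 : ∑ k ∈ Finset.range (2 * M), p (4 * k + 8)
      = ∑ k ∈ Finset.range M, (p (8 * k + 8) + p (8 * k + 12)) := by
    rw [sum_range_two_mul' (fun k => p (4 * k + 8)) M]
    apply Finset.sum_congr rfl
    intro k _
    congr 2 <;> ring
  have hzero : p (8 * M + 4) = 0 := hn _ (by omega)
  have := key_ineq p hmono M (by omega)
  rw [t1, t2, t4, t3]
  linarith
end

section
/- Let p : ℕ → ℝ be non-increasing and non-negative with finite support and total sum W. Define C_4 := Σ_{k≥0}(p_{8k+4} + p_{8k+5} + p_{8k+7}) and L_2 := p_2 + Σ_{k≥2} p_{4k−1}. Then C_4 + 2·L_2 ≤ W. -/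
/-- Four machines pairing inequality: with
`C₄ = Σ_{k≥0} (p (8k+4) + p (8k+5) + p (8k+7))` and `L₂ = p 2 + Σ_{k≥2} p (4k-1)`,
we have `C₄ + 2 L₂ ≤ W`. -/
theorem stmt_12 (p : ℕ → ℝ)
    (hmono : ∀ i j : ℕ, 1 ≤ i → i ≤ j → p j ≤ p i)
    (hnonneg : ∀ j : ℕ, 0 ≤ p j)
    (hfin : ∃ n : ℕ, ∀ j : ℕ, n < j → p j = 0)
    (W : ℝ) (hW : W = ∑' j : ℕ, p (j + 1)) :
    (∑' k : ℕ, (p (8 * k + 4) + p (8 * k + 5) + p (8 * k + 7)))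
      + 2 * (p 2 + ∑' k : ℕ, p (4 * k + 7)) ≤ W := by
  obtain ⟨n, hn⟩ := hfin
  have key : ∀ g : ℕ → ℕ, (∀ k, k ≤ g k) → Summable (fun k => p (g k)) := by
    intro g hg
    apply summable_of_ne_finset_zero (s := Finset.range (n+1))
    intro k hk
    simp only [Finset.mem_range, not_lt] at hk
    exact hn _ (lt_of_lt_of_le (Nat.lt_of_succ_le hk) (hg k))
  set q : ℕ → ℝ := fun k => p (if k = 0 then 2 else 8*k+3) with hqdef
  have hq : Summable q := key (fun k => if k = 0 then 2 else 8*k+3)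
    (by intro k; show k ≤ if k = 0 then 2 else 8*k+3; split <;> omega)
  have s4 := key (fun k => 8*k+4) (by intro k; show k ≤ 8*k+4; omega)
  have s5 := key (fun k => 8*k+5) (by intro k; show k ≤ 8*k+5; omega)
  have s7 := key (fun k => 8*k+7) (by intro k; show k ≤ 8*k+7; omega)
  have s11 := key (fun k => 8*k+11) (by intro k; show k ≤ 8*k+11; omega)
  have sC : Summable (fun k => p (8*k+4) + p (8*k+5) + p (8*k+7)) :=
    (s4.add s5).add s7
  set A : ℕ → ℝ := fun k =>
    (p (8*k+4) + p (8*k+5) + p (8*k+7)) + (2 * p (8*k+7) + 2 * q k) with hAdef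
  set B : ℕ → ℝ := fun k =>
    p (8*k+1) + p (8*k+2) + p (8*k+3) + p (8*k+4) + p (8*k+5) + p (8*k+6)
      + p (8*k+7) + p (8*k+8) with hBdef
  have hA : Summable A := sC.add ((s7.mul_left 2).add (hq.mul_left 2))
  have hB : Summable B := by
    have s1 := key (fun k => 8*k+1) (by intro k; show k ≤ 8*k+1; omega)
    have s2 := key (fun k => 8*k+2) (by intro k; show k ≤ 8*k+2; omega)
    have s3 := key (fun k => 8*k+3) (by intro k; show k ≤ 8*k+3; omega)
    have s6 := key (fun k => 8*k+6) (by intro k; show k ≤ 8*k+6; omega)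
    have s8 := key (fun k => 8*k+8) (by intro k; show k ≤ 8*k+8; omega)
    exact ((((((s1.add s2).add s3).add s4).add s5).add s6).add s7).add s8
  -- split the L₂ tail by parity
  have h78 : ∀ k : ℕ, 4*(2*k)+7 = 8*k+7 := fun k => by ring
  have h711 : ∀ k : ℕ, 4*(2*k+1)+7 = 8*k+11 := fun k => by ring
  have e1 : (∑' k, p (4*k+7)) = (∑' k, p (8*k+7)) + ∑' k, p (8*k+11) := by
    rw [← tsum_even_add_odd (f := fun k => p (4*k+7))
      (by simpa [h78] using s7) (by simpa [h711] using s11)]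
    simp [h78, h711]
  have hq0 : q 0 = p 2 := by simp [hqdef]
  have hqs : ∀ k : ℕ, q (k+1) = p (8*k+11) := by
    intro k
    simp only [hqdef]
    rw [if_neg (Nat.succ_ne_zero k)]
    congr 1
  have e2 : (∑' k, q k) = p 2 + ∑' k, p (8*k+11) := by
    rw [Summable.tsum_eq_zero_add hq, hq0]
    congr 1
  -- LHS = ∑' A
  have eA : (∑' k, A k)
      = (∑' k, (p (8*k+4) + p (8*k+5) + p (8*k+7)))
        + 2 * (p 2 + ∑' k, p (4*k+7)) := by
    have := Summable.tsum_add sC ((s7.mul_left 2).add (hq.mul_left 2))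
    rw [hAdef]
    rw [this, Summable.tsum_add (s7.mul_left 2) (hq.mul_left 2),
      tsum_mul_left, tsum_mul_left, e1, e2]
    ring
  -- W = ∑' B
  have eBsum : ∀ m : ℕ, (∑ k ∈ Finset.range m, B k)
      = ∑ j ∈ Finset.range (8*m), p (j+1) := by
    intro m
    induction m with
    | zero => simp
    | succ m ih =>
      have h8 : 8*(m+1) = 8*m+1+1+1+1+1+1+1+1 := by ring
      rw [Finset.sum_range_succ, ih, h8]
      simp only [Finset.sum_range_succ, hBdef]
      ring_nf
      try ring
  have eW : W = ∑' k, B k := by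
    rw [hW]
    rw [tsum_eq_sum (s := Finset.range (8*(n+1)))
      (by
        intro j hj
        simp only [Finset.mem_range, not_lt] at hj
        exact hn _ (by omega))]
    rw [tsum_eq_sum (s := Finset.range (n+1))
      (by
        intro k hk
        simp only [Finset.mem_range, not_lt] at hk
        simp only [hBdef]
        rw [hn _ (by omega), hn _ (by omega), hn _ (by omega), hn _ (by omega),
          hn _ (by omega), hn _ (by omega), hn _ (by omega), hn _ (by omega)]
        ring)]
    rw [eBsum (n+1)]
  -- termwise comparison
  have hAB : ∀ k, A k ≤ B k := by
    intro k
    have h1 : q k ≤ p (8*k+1) := by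
      apply hmono _ _ (by omega)
      split <;> omega
    have h2 : q k ≤ p (8*k+2) := by
      apply hmono _ _ (by omega)
      split <;> omega
    have h3 : p (8*k+7) ≤ p (8*k+3) := hmono _ _ (by omega) (by omega)
    have h4 : p (8*k+7) ≤ p (8*k+6) := hmono _ _ (by omega) (by omega)
    have h5 : 0 ≤ p (8*k+8) := hnonneg _
    simp only [hAdef, hBdef]
    linarith
  calc (∑' k : ℕ, (p (8 * k + 4) + p (8 * k + 5) + p (8 * k + 7)))
      + 2 * (p 2 + ∑' k : ℕ, p (4 * k + 7)) = ∑' k, A k := eA.symm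
    _ ≤ ∑' k, B k := Summable.tsum_le_tsum hAB hA hB
    _ = W := eW.symm
end

section
/- Let p : ℕ → ℝ be non-increasing and non-negative with finite support and total sum W, with λ ≥ p_1 and W ≤ 5λ. Then C_1 := p_1 + Σ_{k≥1} p_{10k+1} satisfies C_1 ≤ 1.4·λ. -/
/-!
Group the jobs `2, 3, …` into consecutive blocks of ten, `{10k+2, …, 10k+11}`. Since `p` is
non-increasing, each block weighs at least `10 · p (10k+11)`, so
`10 · Σ_{k≥1} p (10k+1) ≤ W - p 1`. Hence `C₁ ≤ p 1 + (W - p 1)/10 = 0.9 p 1 + W/10`, and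
`p 1 ≤ λ`, `W ≤ 5λ` give `C₁ ≤ 0.9λ + 0.5λ = 1.4λ`.
-/

open Finset

theorem nsmul_sum_range_le_sum_range_mul_of_antitone {α : Type*} [AddCommMonoid α]
    [PartialOrder α] [IsOrderedAddMonoid α] {f : ℕ → α} (hf : Antitone f) (m K : ℕ) :
    m • ∑ k ∈ range K, f (m * k + m) ≤ ∑ j ∈ range (m * K), f (j + 1) := by
  induction K with
  | zero => simp
  | succ K ih =>
    have hblock : m • f (m * K + m) ≤ ∑ i ∈ range m, f (m * K + i + 1) := by
      calc m • f (m * K + m) = ∑ _i ∈ range m, f (m * K + m) := by rw [sum_const, card_range]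
        _ ≤ _ := sum_le_sum fun i hi ↦ hf (by rw [mem_range] at hi; omega)
    rw [sum_range_succ, smul_add, Nat.mul_succ, sum_range_add]
    exact add_le_add ih hblock

theorem mul_tsum_mul_add_self_le_tsum_succ_of_antitone {f : ℕ → ℝ} (hf : Antitone f)
    (hf₀ : ∀ j, 0 ≤ f j) (hs : Summable f) (m : ℕ) :
    m * ∑' k, f (m * k + m) ≤ ∑' j, f (j + 1) := by
  rw [← tsum_mul_left]
  refine Real.tsum_le_of_sum_range_le (fun k ↦ mul_nonneg m.cast_nonneg (hf₀ _)) fun K ↦ ?_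
  calc ∑ k ∈ range K, m * f (m * k + m)
      = m • ∑ k ∈ range K, f (m * k + m) := by rw [nsmul_eq_mul, mul_sum]
    _ ≤ ∑ j ∈ range (m * K), f (j + 1) := nsmul_sum_range_le_sum_range_mul_of_antitone hf m K
    _ ≤ ∑' j, f (j + 1) :=
        (summable_nat_add_iff 1).2 hs |>.sum_le_tsum _ fun j _ ↦ hf₀ _

/-- Five machines, first solution, machine 1 (jobs ≡ 1 mod 10):
`C₁ = p 1 + Σ_{k≥1} p (10k+1) ≤ 1.4 λ` when `λ ≥ p 1` and `W ≤ 5 λ`. -/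
theorem stmt_13 (p : ℕ → ℝ)
    (hmono : ∀ i j : ℕ, 1 ≤ i → i ≤ j → p j ≤ p i)
    (hnonneg : ∀ j : ℕ, 0 ≤ p j)
    (hfin : ∃ n : ℕ, ∀ j : ℕ, n < j → p j = 0)
    (W : ℝ) (hW : W = ∑' j : ℕ, p (j + 1))
    (lam : ℝ) (hp1 : p 1 ≤ lam) (hWlam : W ≤ 5 * lam) :
    p 1 + (∑' k : ℕ, p (10 * k + 11)) ≤ 1.4 * lam := by
  set q : ℕ → ℝ := fun j ↦ p (j + 1)
  have hq : Antitone q := fun i j hij ↦ hmono (i + 1) (j + 1) (by omega) (by omega)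
  have hqs : Summable q := by
    obtain ⟨n, hn⟩ := hfin
    exact summable_of_ne_finset_zero (s := range n) fun j hj ↦ hn _ (by simpa using hj)
  have hblocks : 10 * ∑' k, p (10 * k + 11) ≤ W - p 1 := by
    have := mul_tsum_mul_add_self_le_tsum_succ_of_antitone hq (fun j ↦ hnonneg _) hqs 10
    rw [hW, hqs.tsum_eq_zero_add]
    push_cast at this
    linarith
  linarith
end

section
/- Let p : ℕ → ℝ be non-increasing and non-negative with finite support and total sum W. Define C_4 := Σ_{k≥0}(p_{10k+4} + p_{10k+7} + p_{10k+10}) and L_2 := p_2 + Σ_{k≥2} p_{5k−1}. Then 2·C_4 + 2·L_2 ≤ W. -/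
/-- Five machines pairing inequality: with
`C₄ = Σ_{k≥0} (p (10k+4) + p (10k+7) + p (10k+10))` and `L₂ = p 2 + Σ_{k≥2} p (5k-1)`,
we have `2 C₄ + 2 L₂ ≤ W`. -/
theorem stmt_15 (p : ℕ → ℝ)
    (hmono : ∀ i j : ℕ, 1 ≤ i → i ≤ j → p j ≤ p i)
    (hnonneg : ∀ j : ℕ, 0 ≤ p j)
    (hfin : ∃ n : ℕ, ∀ j : ℕ, n < j → p j = 0)
    (W : ℝ) (hW : W = ∑' j : ℕ, p (j + 1)) :
    2 * (∑' k : ℕ, (p (10 * k + 4) + p (10 * k + 7) + p (10 * k + 10)))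
      + 2 * (p 2 + ∑' k : ℕ, p (5 * k + 9)) ≤ W := by
  obtain ⟨n, hn⟩ := hfin
  have hC : (∑' k : ℕ, (p (10 * k + 4) + p (10 * k + 7) + p (10 * k + 10)))
      = ∑ k ∈ Finset.range (n + 1), (p (10 * k + 4) + p (10 * k + 7) + p (10 * k + 10)) := by
    refine tsum_eq_sum ?_
    intro k hk
    rw [Finset.mem_range, not_lt] at hk
    rw [hn _ (by omega), hn _ (by omega), hn _ (by omega)]
    ring
  have hL : (∑' k : ℕ, p (5 * k + 9)) = ∑ m ∈ Finset.range (2 * n + 1), p (5 * m + 9) := by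
    refine tsum_eq_sum ?_
    intro m hm
    rw [Finset.mem_range, not_lt] at hm
    exact hn _ (by omega)
  have hWf : W = ∑ j ∈ Finset.range (10 * n + 10), p (j + 1) := by
    rw [hW]
    refine tsum_eq_sum ?_
    intro j hj
    rw [Finset.mem_range, not_lt] at hj
    exact hn _ (by omega)
  rw [hC, hL, hWf]
  have key : ∀ K : ℕ,
      2 * (∑ k ∈ Finset.range (K + 1), (p (10 * k + 4) + p (10 * k + 7) + p (10 * k + 10)))
        + 2 * (p 2 + ∑ m ∈ Finset.range (2 * K + 1), p (5 * m + 9))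
        ≤ ∑ j ∈ Finset.range (10 * K + 10), p (j + 1) := by
    intro K
    induction K with
    | zero =>
      norm_num [Finset.sum_range_succ]
      have h1 : p 2 ≤ p 1 := hmono 1 2 (by omega) (by omega)
      have h2 : p 4 ≤ p 3 := hmono 3 4 (by omega) (by omega)
      have h3 : p 7 ≤ p 5 := hmono 5 7 (by omega) (by omega)
      have h4 : p 7 ≤ p 6 := hmono 6 7 (by omega) (by omega)
      have h5 : p 9 ≤ p 7 := hmono 7 9 (by omega) (by omega)
      have h6 : p 9 ≤ p 8 := hmono 8 9 (by omega) (by omega)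
      have h7 : p 10 ≤ p 9 := hmono 9 10 (by omega) (by omega)
      linarith
    | succ K ih =>
      rw [Finset.sum_range_succ,
        show 2 * (K + 1) + 1 = (2 * K + 1) + 2 by ring, Finset.sum_range_add,
        show 10 * (K + 1) + 10 = (10 * K + 10) + 10 by ring, Finset.sum_range_add]
      rw [Finset.sum_range_succ, show 2 * K + 1 = 2 * K + 1 from rfl, Finset.sum_range_succ,
        show 10 * K + 10 = 10 * K + 10 from rfl, Finset.sum_range_add] at ih
      norm_num [Finset.sum_range_succ] at ih ⊢
      have f1 : p (10 * K + 14) ≤ p (10 * K + 11) := hmono _ _ (by omega) (by omega)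
      have f2 : p (10 * K + 14) ≤ p (10 * K + 12) := hmono _ _ (by omega) (by omega)
      have f3 : p (10 * K + 14) ≤ p (10 * K + 13) := hmono _ _ (by omega) (by omega)
      have f5 : p (10 * K + 17) ≤ p (10 * K + 15) := hmono _ _ (by omega) (by omega)
      have f6 : p (10 * K + 17) ≤ p (10 * K + 16) := hmono _ _ (by omega) (by omega)
      have f7 : p (10 * K + 19) ≤ p (10 * K + 17) := hmono _ _ (by omega) (by omega)
      have f8 : p (10 * K + 19) ≤ p (10 * K + 18) := hmono _ _ (by omega) (by omega)
      have f9 : p (10 * K + 20) ≤ p (10 * K + 19) := hmono _ _ (by omega) (by omega)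
      simp only [show 10 * (K + 1) + 4 = 10 * K + 14 by ring,
        show 10 * (K + 1) + 7 = 10 * K + 17 by ring,
        show 10 * K + 10 + 10 = 10 * K + 20 by ring,
        show 5 * (2 * K + 1) + 9 = 10 * K + 14 by ring,
        show 5 * (2 * K + 1 + 1) + 9 = 10 * K + 19 by ring,
        show 5 * (2 * K) + 9 = 10 * K + 9 by ring,
        add_assoc] at ih ⊢
      norm_num at ih ⊢
      simp only [show 5 * (2 * K + 2) + 9 = 10 * K + 19 by ring]
      linarith
  exact key n
end

section
/- Let p : ℕ → ℝ be non-increasing and non-negative with finite support and total sum W. Define C_4 := Σ_{k≥0}(p_{10k+4} + p_{10k+7} + p_{10k+10}) and L_1 := p_1 + Σ_{k≥2} p_{5k}. Then 10·C_4 + 5·L_1 ≤ 4·W + p_1. -/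
/-- Five machines pairing inequality: with
`C₄ = Σ_{k≥0} (p (10k+4) + p (10k+7) + p (10k+10))` and `L₁ = p 1 + Σ_{k≥2} p (5k)`,
we have `10 C₄ + 5 L₁ ≤ 4 W + p 1`. -/
theorem stmt_16 (p : ℕ → ℝ)
    (hmono : ∀ i j : ℕ, 1 ≤ i → i ≤ j → p j ≤ p i)
    (hnonneg : ∀ j : ℕ, 0 ≤ p j)
    (hfin : ∃ n : ℕ, ∀ j : ℕ, n < j → p j = 0)
    (W : ℝ) (hW : W = ∑' j : ℕ, p (j + 1)) :
    10 * (∑' k : ℕ, (p (10 * k + 4) + p (10 * k + 7) + p (10 * k + 10)))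
      + 5 * (p 1 + ∑' k : ℕ, p (5 * k + 10)) ≤ 4 * W + p 1 := by
  obtain ⟨n, hn⟩ := hfin
  set N := n + 1 with hN
  have h1 : (∑' k : ℕ, (p (10 * k + 4) + p (10 * k + 7) + p (10 * k + 10)))
      = ∑ k ∈ Finset.range N, (p (10 * k + 4) + p (10 * k + 7) + p (10 * k + 10)) := by
    apply tsum_eq_sum
    intro k hk
    rw [Finset.mem_range, not_lt] at hk
    rw [hn _ (by omega), hn _ (by omega), hn _ (by omega)]
    ring
  have h2 : (∑' k : ℕ, p (5 * k + 10)) = ∑ k ∈ Finset.range (2 * N), p (5 * k + 10) := by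
    apply tsum_eq_sum
    intro k hk
    rw [Finset.mem_range, not_lt] at hk
    exact hn _ (by omega)
  have h3 : (∑' j : ℕ, p (j + 1)) = ∑ j ∈ Finset.range (10 * N + 1), p (j + 1) := by
    apply tsum_eq_sum
    intro j hj
    rw [Finset.mem_range, not_lt] at hj
    exact hn _ (by omega)
  have key : ∀ M : ℕ,
      10 * ∑ k ∈ Finset.range M, (p (10 * k + 4) + p (10 * k + 7) + p (10 * k + 10))
        + 5 * ∑ k ∈ Finset.range (2 * M), p (5 * k + 10)
      ≤ 4 * ∑ j ∈ Finset.range (10 * M), p (j + 1 + 1) := by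
    intro M
    induction M with
    | zero => simp
    | succ m ih =>
      have e2 : 2 * (m + 1) = 2 * m + 1 + 1 := by ring
      have e10 : 10 * (m + 1) = 10 * m + 1 + 1 + 1 + 1 + 1 + 1 + 1 + 1 + 1 + 1 := by ring
      rw [Finset.sum_range_succ, e2, e10]
      simp only [Finset.sum_range_succ]
      have f1 : p (10 * m + 4) ≤ p (10 * m + 2) := hmono _ _ (by omega) (by omega)
      have f2 : p (10 * m + 4) ≤ p (10 * m + 3) := hmono _ _ (by omega) (by omega)
      have f3 : p (10 * m + 7) ≤ p (10 * m + 4) := hmono _ _ (by omega) (by omega)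
      have f4 : p (10 * m + 7) ≤ p (10 * m + 5) := hmono _ _ (by omega) (by omega)
      have f5 : p (10 * m + 7) ≤ p (10 * m + 6) := hmono _ _ (by omega) (by omega)
      have f6 : p (10 * m + 10) ≤ p (10 * m + 7) := hmono _ _ (by omega) (by omega)
      have f7 : p (10 * m + 10) ≤ p (10 * m + 8) := hmono _ _ (by omega) (by omega)
      have f8 : p (10 * m + 10) ≤ p (10 * m + 9) := hmono _ _ (by omega) (by omega)
      have f9 : p (10 * m + 15) ≤ p (10 * m + 10) := hmono _ _ (by omega) (by omega)
      have f10 : p (10 * m + 15) ≤ p (10 * m + 11) := hmono _ _ (by omega) (by omega)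
      have g1 : p (5 * (2 * m) + 10) = p (10 * m + 10) := by ring_nf
      have g2 : p (5 * (2 * m + 1) + 10) = p (10 * m + 15) := by ring_nf
      have g3 : p (10 * m + 1 + 1) = p (10 * m + 2) := by ring_nf
      have g4 : p (10 * m + 1 + 1 + 1) = p (10 * m + 3) := by ring_nf
      have g5 : p (10 * m + 1 + 1 + 1 + 1) = p (10 * m + 4) := by ring_nf
      have g6 : p (10 * m + 1 + 1 + 1 + 1 + 1) = p (10 * m + 5) := by ring_nf
      have g7 : p (10 * m + 1 + 1 + 1 + 1 + 1 + 1) = p (10 * m + 6) := by ring_nf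
      have g8 : p (10 * m + 1 + 1 + 1 + 1 + 1 + 1 + 1) = p (10 * m + 7) := by ring_nf
      have g9 : p (10 * m + 1 + 1 + 1 + 1 + 1 + 1 + 1 + 1) = p (10 * m + 8) := by ring_nf
      have g10 : p (10 * m + 1 + 1 + 1 + 1 + 1 + 1 + 1 + 1 + 1) = p (10 * m + 9) := by ring_nf
      have g11 : p (10 * m + 1 + 1 + 1 + 1 + 1 + 1 + 1 + 1 + 1 + 1) = p (10 * m + 10) := by ring_nf
      have g12 : p (10 * m + 1 + 1 + 1 + 1 + 1 + 1 + 1 + 1 + 1 + 1 + 1) = p (10 * m + 11) := by ring_nf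
      rw [g1, g2]
      simp only [g3, g4, g5, g6, g7, g8, g9, g10, g11, g12]
      linarith [ih]
  have hsplit : ∑ j ∈ Finset.range (10 * N + 1), p (j + 1)
      = (∑ j ∈ Finset.range (10 * N), p (j + 1 + 1)) + p (0 + 1) :=
    Finset.sum_range_succ' _ _
  have hp01 : p (0 + 1) = p 1 := by norm_num
  rw [hW, h1, h2, h3, hsplit, hp01]
  linarith [key N]
end

section
/- For two machines and any constant number M of parallel ordinal solutions, there exists an integer i with 3 ≤ i ≤ M+3 and an input realization (i−1 jobs of size i followed by i jobs of size i−1, and then zeros) such that every one of the M solutions has makespan at least i(i−1)+1 while the optimal offline makespan equals i(i−1). Consequently the competitive ratio of any M-solution ordinal algorithm on two machines is at least 1 + 1/((M+2)(M+3)). -/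
/-!
By pigeonhole some `i ∈ [3, M + 3]` is the type of none of the `M` solutions. On the
realization with `i - 1` jobs of size `i` and `i` jobs of size `i - 1` the total load is
`2 i (i - 1)`, so makespan `i (i - 1)` requires a perfectly balanced split. If one machine
gets `a` big and `b` small jobs, `a i + b (i - 1) = i (i - 1)` forces `(i - 1) ∣ a`, so the big
jobs are all together and the small ones all on the other machine: the split has type `i`.
Hence every given solution has makespan at least `i (i - 1) + 1`.
-/

open Finset

/-- The type of a solution `g`: the first job `k ≥ 2` not on the machine of job `1`
(`0` if there is none). -/
noncomputable def switchIndex (g : ℕ → Bool) : ℕ :=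
  sInf {k | 2 ≤ k ∧ g k ≠ g 1}

lemma switchIndex_eq {g : ℕ → Bool} {i : ℕ} {c : Bool} (hi : 2 ≤ i)
    (hbefore : ∀ j ∈ Ico 1 i, g j = c) (hswitch : g i = !c) : switchIndex g = i := by
  have hg1 : g 1 = c := hbefore 1 (by simp; omega)
  have hmem : i ∈ {k | 2 ≤ k ∧ g k ≠ g 1} := ⟨hi, by simp [hswitch, hg1]⟩
  refine le_antisymm (Nat.sInf_le hmem) (le_csInf ⟨i, hmem⟩ fun k ⟨hk2, hk⟩ => ?_)
  by_contra! hki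
  exact hk ((hbefore k (by simp; omega)).trans hg1.symm)

lemma exists_mem_Icc_forall_ne {M : ℕ} (f : Fin M → ℕ) (a : ℕ) :
    ∃ i ∈ Icc a (a + M), ∀ k, f k ≠ i := by
  have hcard : #(univ.image f) < #(Icc a (a + M)) := by
    calc #(univ.image f) ≤ M := card_image_le.trans (by simp)
      _ < #(Icc a (a + M)) := by simp; omega
  obtain ⟨i, hi, hnot⟩ := exists_mem_notMem_of_card_lt_card hcard
  exact ⟨i, hi, fun k hk => hnot (mem_image.mpr ⟨k, mem_univ k, hk⟩)⟩

lemma eq_zero_or_eq_of_mul_succ_add_mul_eq {n a b : ℕ} (hn : 1 ≤ n) (ha : a ≤ n) (hb : b ≤ n + 1)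
    (h : a * (n + 1) + b * n = (n + 1) * n) : (a = 0 ∧ b = n + 1) ∨ (a = n ∧ b = 0) := by
  have hdvd : n ∣ a := by
    have : n ∣ (a + b) * n + a := ⟨n + 1, by linarith⟩
    exact (Nat.dvd_add_right (dvd_mul_left n _)).mp this
  rcases Nat.eq_zero_or_pos a with rfl | hpos
  · exact .inl ⟨rfl, Nat.eq_of_mul_eq_mul_right hn (by linarith)⟩
  · obtain rfl : a = n := le_antisymm ha (Nat.le_of_dvd hpos hdvd)
    exact .inr ⟨rfl, by nlinarith⟩

lemma card_filter_add_card_filter_not_bool (s : Finset ℕ) (g : ℕ → Bool) :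
    #{j ∈ s | g j} + #{j ∈ s | !g j} = #s := by
  simpa using card_filter_add_card_filter_not (s := s) (fun j => g j = true)

section
variable (i : ℕ)

def jobSize (j : ℕ) : ℕ :=
  if j = 0 then 0 else if j < i then i else if j < 2 * i then i - 1 else 0

def machineLoad (g : ℕ → Bool) : ℕ :=
  ∑ j ∈ Ico 1 (2 * i), if g j then jobSize i j else 0

def makespan (g : ℕ → Bool) : ℕ :=
  max (machineLoad i g) (machineLoad i fun j => !g j)

variable {i}

lemma jobSize_of_lt {j : ℕ} (hj : 1 ≤ j) (hji : j < i) : jobSize i j = i := by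
  unfold jobSize; split_ifs <;> omega

lemma jobSize_of_le_of_lt {j : ℕ} (hij : i ≤ j) (hj : j < 2 * i) : jobSize i j = i - 1 := by
  unfold jobSize; split_ifs <;> omega

lemma jobSize_of_le {j : ℕ} (hj : 2 * i ≤ j) : jobSize i j = 0 := by
  unfold jobSize; split_ifs <;> omega

lemma machineLoad_eq (hi : 1 ≤ i) (g : ℕ → Bool) :
    machineLoad i g = #{j ∈ Ico 1 i | g j} * i + #{j ∈ Ico i (2 * i) | g j} * (i - 1) := by
  rw [machineLoad, ← sum_Ico_consecutive _ hi (by omega), ← sum_filter, ← sum_filter,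
    sum_const_nat fun j hj => ?_, sum_const_nat fun j hj => ?_] <;>
    simp only [mem_filter, mem_Ico] at hj
  exacts [jobSize_of_le_of_lt hj.1.1 hj.1.2, jobSize_of_lt hj.1.1 hj.1.2]

lemma machineLoad_add_machineLoad_not (hi : 1 ≤ i) (g : ℕ → Bool) :
    machineLoad i g + machineLoad i (fun j => !g j) = 2 * (i * (i - 1)) := by
  have hbig := card_filter_add_card_filter_not_bool (Ico 1 i) g
  have hsmall := card_filter_add_card_filter_not_bool (Ico i (2 * i)) g
  simp only [Nat.card_Ico] at hbig hsmall
  rw [machineLoad_eq hi, machineLoad_eq hi]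
  calc _ = (#{j ∈ Ico 1 i | g j} + #{j ∈ Ico 1 i | !g j}) * i
        + (#{j ∈ Ico i (2 * i) | g j} + #{j ∈ Ico i (2 * i) | !g j}) * (i - 1) := by ring
    _ = 2 * (i * (i - 1)) := by rw [hbig, hsmall, show 2 * i - i = i by omega]; ring

lemma le_makespan (hi : 1 ≤ i) (g : ℕ → Bool) : i * (i - 1) ≤ makespan i g := by
  have := machineLoad_add_machineLoad_not hi g
  unfold makespan
  omega

lemma makespan_decide_lt (hi : 1 ≤ i) : makespan i (fun j => decide (j < i)) = i * (i - 1) := by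
  have hload : machineLoad i (fun j => decide (j < i)) = i * (i - 1) := by
    rw [machineLoad_eq hi, filter_true_of_mem fun j hj => by simpa using (mem_Ico.mp hj).2,
      filter_false_of_mem fun j hj => by simpa using (mem_Ico.mp hj).1]
    simp [mul_comm]
  have := machineLoad_add_machineLoad_not hi fun j => decide (j < i)
  simp only [makespan, hload] at this ⊢
  omega

lemma switchIndex_eq_of_makespan_le (hi : 2 ≤ i) {g : ℕ → Bool} (h : makespan i g ≤ i * (i - 1)) :
    switchIndex g = i := by
  have hi1 : 1 ≤ i := by omega
  have hload : machineLoad i g = i * (i - 1) := by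
    have := machineLoad_add_machineLoad_not hi1 g
    unfold makespan at h
    omega
  rw [machineLoad_eq hi1] at hload
  have hbig := card_filter_le (Ico 1 i) fun j => g j
  have hsmall := card_filter_le (Ico i (2 * i)) fun j => g j
  simp only [Nat.card_Ico] at hbig hsmall
  obtain ⟨n, rfl⟩ : ∃ n, i = n + 1 := ⟨i - 1, by omega⟩
  simp only [Nat.add_sub_cancel] at hload hbig
  have hi_mem : n + 1 ∈ Ico (n + 1) (2 * (n + 1)) := by simp
  rcases eq_zero_or_eq_of_mul_succ_add_mul_eq (by omega) hbig (by omega) hload with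
    ⟨ha, hb⟩ | ⟨ha, hb⟩
  · have hbig_none := card_filter_eq_zero_iff.mp ha
    have hsmall_all := card_filter_eq_iff.mp (hb.trans (by simp; omega))
    exact switchIndex_eq hi (c := false) (fun j hj => by simpa using hbig_none j hj)
      (hsmall_all _ hi_mem)
  · have hbig_all := card_filter_eq_iff.mp (ha.trans (by simp))
    have hsmall_none := card_filter_eq_zero_iff.mp hb
    exact switchIndex_eq hi (c := true) hbig_all (by simpa using hsmall_none _ hi_mem)

lemma tsum_eq_machineLoad (g : ℕ → Bool) :
    ∑' j : ℕ, (if g (j + 1) then (jobSize i (j + 1) : ℝ) else 0) = machineLoad i g := by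
  rw [tsum_eq_sum (s := range (2 * i - 1)) fun j hj => by
      rw [jobSize_of_le (by simp at hj; omega)]; simp,
    machineLoad, sum_Ico_eq_sum_range]
  push_cast
  simp only [add_comm 1]

lemma max_tsum_eq_makespan (g : ℕ → Bool) :
    max (∑' j : ℕ, if g (j + 1) then (jobSize i (j + 1) : ℝ) else 0)
      (∑' j : ℕ, if g (j + 1) then 0 else (jobSize i (j + 1) : ℝ)) = makespan i g := by
  rw [makespan, Nat.cast_max, ← tsum_eq_machineLoad, ← tsum_eq_machineLoad]
  congr 1
  exact tsum_congr fun j => by cases g (j + 1) <;> rfl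

end

lemma one_add_one_div_le_add_one_div {x y : ℝ} (hx : 0 < x) (hxy : x ≤ y) :
    1 + 1 / y ≤ (x + 1) / x := by
  rw [add_div, div_self hx.ne']
  gcongr

theorem stmt_17_general (M : ℕ) (sols : Fin M → ℕ → Bool) :
    ∃ i : ℕ, 3 ≤ i ∧ i ≤ M + 3 ∧
      ∃ p : ℕ → ℝ,
        (∀ j : ℕ, 1 ≤ j → j ≤ i - 1 → p j = (i : ℝ)) ∧
        (∀ j : ℕ, i ≤ j → j ≤ 2 * i - 1 → p j = (i : ℝ) - 1) ∧
        (∀ j : ℕ, 2 * i - 1 < j → p j = 0) ∧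
        (∀ k : Fin M,
          ((i : ℝ) * ((i : ℝ) - 1) + 1) ≤
            max (∑' j : ℕ, if sols k (j + 1) then p (j + 1) else 0)
                (∑' j : ℕ, if sols k (j + 1) then 0 else p (j + 1))) ∧
        (∃ g : ℕ → Bool,
          max (∑' j : ℕ, if g (j + 1) then p (j + 1) else 0)
              (∑' j : ℕ, if g (j + 1) then 0 else p (j + 1))
            = (i : ℝ) * ((i : ℝ) - 1)) ∧
        (∀ g : ℕ → Bool,
          (i : ℝ) * ((i : ℝ) - 1) ≤
            max (∑' j : ℕ, if g (j + 1) then p (j + 1) else 0)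
                (∑' j : ℕ, if g (j + 1) then 0 else p (j + 1))) ∧
        (1 + 1 / (((M : ℝ) + 2) * ((M : ℝ) + 3)) ≤
          ((i : ℝ) * ((i : ℝ) - 1) + 1) / ((i : ℝ) * ((i : ℝ) - 1))) := by
  obtain ⟨i, hi, huntyped⟩ := exists_mem_Icc_forall_ne (fun k => switchIndex (sols k)) 3
  rw [mem_Icc] at hi
  have hcast : ((i * (i - 1) : ℕ) : ℝ) = (i : ℝ) * ((i : ℝ) - 1) := by
    rw [Nat.cast_mul, Nat.cast_pred (by omega)]
  refine ⟨i, hi.1, by omega, fun j => jobSize i j, fun j hj hji => ?_, fun j hj hji => ?_,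
    fun j hj => ?_, fun k => ?_, ⟨fun j => decide (j < i), ?_⟩, fun g => ?_, ?_⟩ <;>
    beta_reduce
  · rw [jobSize_of_lt hj (by omega)]
  · rw [jobSize_of_le_of_lt hj (by omega), Nat.cast_pred (by omega)]
  · rw [jobSize_of_le (by omega), Nat.cast_zero]
  · rw [max_tsum_eq_makespan, ← hcast, ← Nat.cast_succ, Nat.cast_le, Nat.succ_le_iff]
    exact lt_of_le_of_ne (le_makespan (by omega) _)
      fun h => huntyped k (switchIndex_eq_of_makespan_le (by omega) h.ge)
  · rw [max_tsum_eq_makespan (fun j => decide (j < i)), makespan_decide_lt (by omega), hcast]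
  · rw [max_tsum_eq_makespan, ← hcast, Nat.cast_le]
    exact le_makespan (by omega) g
  · have hi3 : (3 : ℝ) ≤ i := by exact_mod_cast hi.1
    have hiM : (i : ℝ) ≤ M + 3 := by exact_mod_cast (by omega : i ≤ M + 3)
    exact one_add_one_div_le_add_one_div (by nlinarith) (by nlinarith)

/-- Multi-solution lower bound for two machines: for any `M ≥ 1` fixed ordinal
solutions (each a partition of the positive job indexes into two machines, encoded
by a Boolean function), there exist `3 ≤ i ≤ M + 3` and an input realization
(`i - 1` jobs of size `i`, then `i` jobs of size `i - 1`, then zeros) such that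
every one of the `M` solutions has makespan at least `i(i-1) + 1`, while the
optimal offline makespan equals `i(i-1)`; consequently the competitive ratio is at
least `1 + 1/((M+2)(M+3))`. -/
theorem stmt_17 (M : ℕ) (hM : 1 ≤ M) (sols : Fin M → ℕ → Bool) :
    ∃ i : ℕ, 3 ≤ i ∧ i ≤ M + 3 ∧
      ∃ p : ℕ → ℝ,
        (∀ j : ℕ, 1 ≤ j → j ≤ i - 1 → p j = (i : ℝ)) ∧
        (∀ j : ℕ, i ≤ j → j ≤ 2 * i - 1 → p j = (i : ℝ) - 1) ∧
        (∀ j : ℕ, 2 * i - 1 < j → p j = 0) ∧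
        (∀ k : Fin M,
          ((i : ℝ) * ((i : ℝ) - 1) + 1) ≤
            max (∑' j : ℕ, if sols k (j + 1) then p (j + 1) else 0)
                (∑' j : ℕ, if sols k (j + 1) then 0 else p (j + 1))) ∧
        (∃ g : ℕ → Bool,
          max (∑' j : ℕ, if g (j + 1) then p (j + 1) else 0)
              (∑' j : ℕ, if g (j + 1) then 0 else p (j + 1))
            = (i : ℝ) * ((i : ℝ) - 1)) ∧
        (∀ g : ℕ → Bool,
          (i : ℝ) * ((i : ℝ) - 1) ≤
            max (∑' j : ℕ, if g (j + 1) then p (j + 1) else 0)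
                (∑' j : ℕ, if g (j + 1) then 0 else p (j + 1))) ∧
        (1 + 1 / (((M : ℝ) + 2) * ((M : ℝ) + 3)) ≤
          ((i : ℝ) * ((i : ℝ) - 1) + 1) / ((i : ℝ) * ((i : ℝ) - 1))) :=
  stmt_17_general M sols
end

section
/- Any two-solution ordinal algorithm for scheduling on two identical machines has competitive ratio at least 1.25. Concretely: for every pair of partitions of {1,2,3,4,5} into two sets each, there exists a non-increasing size sequence from the list ⟨4,1,1,1,1⟩, ⟨3,2,2,1,0⟩, ⟨2,2,2,1,1⟩, ⟨2,1,1,1,1⟩ such that both partitions give makespan at least 1.25 times the optimal makespan for that sequence. -/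
def Gd (p : Fin 5 → ℕ) (o : ℕ) (f : Fin 5 → Bool) : Prop :=
  5 * o ≤ 4 * max (∑ j : Fin 5, if f j then p j else 0) (∑ j : Fin 5, if f j then 0 else p j)

instance (p : Fin 5 → ℕ) (o : ℕ) (f : Fin 5 → Bool) : Decidable (Gd p o f) := by
  unfold Gd; infer_instance

lemma key : ∀ f g : Fin 5 → Bool,
    (Gd ![4,1,1,1,1] 4 f ∧ Gd ![4,1,1,1,1] 4 g) ∨
    (Gd ![3,2,2,1,0] 4 f ∧ Gd ![3,2,2,1,0] 4 g) ∨
    (Gd ![2,2,2,1,1] 4 f ∧ Gd ![2,2,2,1,1] 4 g) ∨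
    (Gd ![2,1,1,1,1] 3 f ∧ Gd ![2,1,1,1,1] 3 g) := by decide

lemma toReal (pN : Fin 5 → ℕ) (o : ℕ) (f : Fin 5 → Bool) (h : Gd pN o f) :
    1.25 * (o : ℝ) ≤ max (∑ j : Fin 5, if f j then (pN j : ℝ) else 0)
      (∑ j : Fin 5, if f j then 0 else (pN j : ℝ)) := by
  unfold Gd at h
  have h' : ((5 * o : ℕ) : ℝ) ≤ ((4 * max (∑ j : Fin 5, if f j then pN j else 0)
      (∑ j : Fin 5, if f j then 0 else pN j) : ℕ) : ℝ) := by exact_mod_cast h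
  push_cast [apply_ite (Nat.cast : ℕ → ℝ)] at h'
  linarith [h']

lemma cast1 : (![4,1,1,1,1] : Fin 5 → ℝ) = fun j => ((![4,1,1,1,1] : Fin 5 → ℕ) j : ℝ) := by
  funext j; fin_cases j <;> norm_num
lemma cast2 : (![3,2,2,1,0] : Fin 5 → ℝ) = fun j => ((![3,2,2,1,0] : Fin 5 → ℕ) j : ℝ) := by
  funext j; fin_cases j <;> norm_num
lemma cast3 : (![2,2,2,1,1] : Fin 5 → ℝ) = fun j => ((![2,2,2,1,1] : Fin 5 → ℕ) j : ℝ) := by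
  funext j; fin_cases j <;> norm_num
lemma cast4 : (![2,1,1,1,1] : Fin 5 → ℝ) = fun j => ((![2,1,1,1,1] : Fin 5 → ℕ) j : ℝ) := by
  funext j; fin_cases j <;> norm_num

/-- Lower bound of 1.25 for two-solution ordinal algorithms on two machines:
for every pair of partitions `f, g` of the first five job indexes into two
machines, one of the four listed non-increasing size sequences (with optimal
makespans 4, 4, 4, 3 respectively) forces both partitions to have makespan at
least `1.25` times the optimal makespan. -/
theorem stmt_19 (f g : Fin 5 → Bool) :
    ∃ (p : Fin 5 → ℝ) (opt : ℝ),
      ((p = ![4, 1, 1, 1, 1] ∧ opt = 4) ∨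
       (p = ![3, 2, 2, 1, 0] ∧ opt = 4) ∨
       (p = ![2, 2, 2, 1, 1] ∧ opt = 4) ∨
       (p = ![2, 1, 1, 1, 1] ∧ opt = 3)) ∧
      1.25 * opt ≤ max (∑ j : Fin 5, if f j then p j else 0)
                       (∑ j : Fin 5, if f j then 0 else p j) ∧
      1.25 * opt ≤ max (∑ j : Fin 5, if g j then p j else 0)
                       (∑ j : Fin 5, if g j then 0 else p j) := by
  rcases key f g with ⟨hf, hg⟩ | ⟨hf, hg⟩ | ⟨hf, hg⟩ | ⟨hf, hg⟩
  · refine ⟨![4,1,1,1,1], 4, Or.inl ⟨rfl, rfl⟩, ?_, ?_⟩ <;>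
      simp only [cast1]
    · simpa using toReal _ _ f hf
    · simpa using toReal _ _ g hg
  · refine ⟨![3,2,2,1,0], 4, Or.inr (Or.inl ⟨rfl, rfl⟩), ?_, ?_⟩ <;>
      simp only [cast2]
    · simpa using toReal _ _ f hf
    · simpa using toReal _ _ g hg
  · refine ⟨![2,2,2,1,1], 4, Or.inr (Or.inr (Or.inl ⟨rfl, rfl⟩)), ?_, ?_⟩ <;>
      simp only [cast3]
    · simpa using toReal _ _ f hf
    · simpa using toReal _ _ g hg
  · refine ⟨![2,1,1,1,1], 3, Or.inr (Or.inr (Or.inr ⟨rfl, rfl⟩)), ?_, ?_⟩ <;>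
      simp only [cast4]
    · simpa using toReal _ _ f hf
    · simpa using toReal _ _ g hg
end
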